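/- Let ν ∈ ℝ^d be a unit vector, V ∈ ℝ^d with c := V·ν ≥ δ > 0, let g ∈ ℝ^d be a fixed vector with |g| ≤ M, and for small ε > 0 set ν' := (cν + εg)/|cν + εg| and c' := V·ν'. Then there exists a constant C = C(δ, M, |V|) such that for all sufficiently small ε > 0: (i) |ν' − ν| ≤ Cε, and (ii) |c'ν' − cν − εg| ≤ Cε² + (ε/c)|g·W|, where W := 2(V·ν)ν − V. In particular, if g·W = 0, then |c'ν' − cν − εg| = o(ε). -/

import Mathlib

open Metric Set Filter
open scoped RealInnerProductSpace Topology

noncomputable section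

abbrev E (d : ℕ) := EuclideanSpace ℝ (Fin d)

def newDir {d : ℕ} (V ν g : E d) (ε : ℝ) : E d :=
  ‖⟪V, ν⟫ • ν + ε • g‖⁻¹ • (⟪V, ν⟫ • ν + ε • g)

/-!
Write `u = cν + εg` and `n = ‖u‖`, so that `ν' = u / n`. Since `ν'` is parallel to `u`,
`c'ν' - u = ((V·u - n²) / n²) u` has norm `|V·u - n²| / n`, and expanding with `‖ν‖ = 1` gives
`V·u - n² = -(ε g·W + ε²‖g‖²)`: the first-order term is exactly `g·W`. With `n ≥ c - ε‖g‖`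
this is (ii). For (i), normalising `u` moves it by at most twice its distance `ε‖g‖` to the ray
through `ν`, divided by `n`.
-/

section NormedSpace

variable {F : Type*} [NormedAddCommGroup F] [NormedSpace ℝ F]

lemma sub_abs_mul_norm_le_norm_smul_add {ν g : F} (hν : ‖ν‖ = 1) (c ε : ℝ) :
    c - |ε| * ‖g‖ ≤ ‖c • ν + ε • g‖ := by
  have h := norm_sub_le (c • ν + ε • g) (ε • g)
  rw [add_sub_cancel_right, norm_smul, norm_smul, hν, mul_one, Real.norm_eq_abs,
    Real.norm_eq_abs] at h
  linarith [le_abs_self c]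

lemma norm_inv_norm_smul_sub_le {x y : F} (hx : x ≠ 0) (hy : ‖y‖ = 1) {a : ℝ} (ha : 0 ≤ a) :
    ‖‖x‖⁻¹ • x - y‖ ≤ 2 * ‖x - a • y‖ / ‖x‖ := by
  have hx' : 0 < ‖x‖ := norm_pos_iff.mpr hx
  have hnorm : |a - ‖x‖| ≤ ‖x - a • y‖ := by
    have h := abs_norm_sub_norm_le (a • y) x
    rwa [norm_smul, hy, mul_one, Real.norm_of_nonneg ha, norm_sub_rev] at h
  have hsplit : x - ‖x‖ • y = (x - a • y) + (a - ‖x‖) • y := by module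
  have hnum : ‖x - ‖x‖ • y‖ ≤ 2 * ‖x - a • y‖ := by
    calc ‖x - ‖x‖ • y‖ ≤ ‖x - a • y‖ + |a - ‖x‖| := by
          rw [hsplit]
          simpa [norm_smul, hy] using norm_add_le (x - a • y) ((a - ‖x‖) • y)
      _ ≤ 2 * ‖x - a • y‖ := by linarith
  have hfactor : ‖x‖⁻¹ • x - y = ‖x‖⁻¹ • (x - ‖x‖ • y) := by
    rw [smul_sub, smul_smul, inv_mul_cancel₀ hx'.ne', one_smul]
  rw [hfactor, norm_smul, Real.norm_of_nonneg (inv_nonneg.mpr hx'.le), inv_mul_eq_div]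
  gcongr

end NormedSpace

section InnerProductSpace

variable {F : Type*} [NormedAddCommGroup F] [InnerProductSpace ℝ F]

lemma norm_inner_inv_norm_smul_smul_sub (V u : F) :
    ‖⟪V, ‖u‖⁻¹ • u⟫ • (‖u‖⁻¹ • u) - u‖ = |⟪V, u⟫ - ‖u‖ ^ 2| / ‖u‖ := by
  rcases eq_or_ne u 0 with rfl | hu
  · simp
  have hu' : 0 < ‖u‖ := norm_pos_iff.mpr hu
  have hcollinear : ⟪V, ‖u‖⁻¹ • u⟫ • (‖u‖⁻¹ • u) - u = ((⟪V, u⟫ - ‖u‖ ^ 2) / ‖u‖ ^ 2) • u := by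
    rw [real_inner_smul_right, smul_smul, sub_div, div_self (by positivity), sub_smul, one_smul]
    congr 2
    field_simp
  rw [hcollinear, norm_smul, Real.norm_eq_abs, abs_div, abs_of_pos (by positivity : 0 < ‖u‖ ^ 2)]
  field_simp

lemma norm_two_inner_smul_sub {ν : F} (hν : ‖ν‖ = 1) (V : F) :
    ‖(2 * ⟪V, ν⟫) • ν - V‖ = ‖V‖ := by
  have hsq : ‖(2 * ⟪V, ν⟫) • ν - V‖ ^ 2 = ‖V‖ ^ 2 := by
    rw [norm_sub_sq_real, norm_smul, real_inner_smul_left, hν, real_inner_comm, Real.norm_eq_abs]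
    ring_nf
    rw [sq_abs]
    ring
  exact (sq_eq_sq₀ (norm_nonneg _) (norm_nonneg _)).mp hsq

lemma inner_sub_norm_sq_eq {ν : F} (hν : ‖ν‖ = 1) (V g : F) (ε : ℝ) :
    ⟪V, ⟪V, ν⟫ • ν + ε • g⟫ - ‖⟪V, ν⟫ • ν + ε • g‖ ^ 2
      = -(ε * ⟪g, (2 * ⟪V, ν⟫) • ν - V⟫ + ε ^ 2 * ‖g‖ ^ 2) := by
  rw [norm_add_sq_real, inner_add_right, inner_sub_right, norm_smul, norm_smul, hν,
    real_inner_smul_left, real_inner_smul_right, real_inner_smul_right, real_inner_smul_right,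
    real_inner_smul_right, real_inner_comm g ν, real_inner_comm g V, Real.norm_eq_abs,
    Real.norm_eq_abs]
  ring_nf
  rw [sq_abs, sq_abs]
  ring

end InnerProductSpace

lemma inv_le_inv_add_of_sub_le {c n s : ℝ} (hc : 0 < c) (hs : 0 ≤ s) (hsc : 2 * s ≤ c)
    (hn : c - s ≤ n) : n⁻¹ ≤ c⁻¹ + 2 * s / c ^ 2 := by
  have hn' : c / 2 ≤ n := by linarith
  have hn₀ : 0 < n := by linarith
  calc n⁻¹ = c⁻¹ + (c - n) / (n * c) := by field_simp; ring
    _ ≤ c⁻¹ + s / (c / 2 * c) := by gcongr; linarith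
    _ = c⁻¹ + 2 * s / c ^ 2 := by ring

section NewDir

variable {d : ℕ} {ν V g : E d} {ε : ℝ}

lemma half_inner_le_norm_smul_add (hν : ‖ν‖ = 1) (hε : 0 ≤ ε)
    (hsmall : 2 * (ε * ‖g‖) ≤ ⟪V, ν⟫) :
    ⟪V, ν⟫ / 2 ≤ ‖⟪V, ν⟫ • ν + ε • g‖ := by
  have h := sub_abs_mul_norm_le_norm_smul_add (g := g) hν ⟪V, ν⟫ ε
  rw [abs_of_nonneg hε] at h
  linarith

lemma norm_newDir_sub_le (hν : ‖ν‖ = 1) (hc : 0 < ⟪V, ν⟫) (hε : 0 ≤ ε)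
    (hsmall : 2 * (ε * ‖g‖) ≤ ⟪V, ν⟫) :
    ‖newDir V ν g ε - ν‖ ≤ 4 * ‖g‖ / ⟪V, ν⟫ * ε := by
  have hn := half_inner_le_norm_smul_add hν hε hsmall
  have hu : ⟪V, ν⟫ • ν + ε • g ≠ 0 := norm_pos_iff.mp (by linarith)
  calc ‖newDir V ν g ε - ν‖ ≤ 2 * ‖⟪V, ν⟫ • ν + ε • g - ⟪V, ν⟫ • ν‖ / ‖⟪V, ν⟫ • ν + ε • g‖ :=
        norm_inv_norm_smul_sub_le hu hν hc.le
    _ ≤ 2 * (ε * ‖g‖) / (⟪V, ν⟫ / 2) := by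
        rw [add_sub_cancel_left, norm_smul, Real.norm_of_nonneg hε]
        gcongr
    _ = 4 * ‖g‖ / ⟪V, ν⟫ * ε := by ring

lemma norm_inner_newDir_smul_sub_le (hν : ‖ν‖ = 1) (hc : 0 < ⟪V, ν⟫) (hε : 0 ≤ ε)
    (hsmall : 2 * (ε * ‖g‖) ≤ ⟪V, ν⟫) :
    ‖⟪V, newDir V ν g ε⟫ • newDir V ν g ε - ⟪V, ν⟫ • ν - ε • g‖ ≤
      2 * ‖g‖ * (|⟪g, (2 * ⟪V, ν⟫) • ν - V⟫| / ⟪V, ν⟫ + ‖g‖) / ⟪V, ν⟫ * ε ^ 2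
        + ε / ⟪V, ν⟫ * |⟪g, (2 * ⟪V, ν⟫) • ν - V⟫| := by
  have hn := half_inner_le_norm_smul_add hν hε hsmall
  have hlow := sub_abs_mul_norm_le_norm_smul_add (g := g) hν ⟪V, ν⟫ ε
  rw [abs_of_nonneg hε] at hlow
  have hinv := inv_le_inv_add_of_sub_le hc (by positivity) hsmall hlow
  set A := |⟪g, (2 * ⟪V, ν⟫) • ν - V⟫|
  set n := ‖⟪V, ν⟫ • ν + ε • g‖
  have hnum : |ε * ⟪g, (2 * ⟪V, ν⟫) • ν - V⟫ + ε ^ 2 * ‖g‖ ^ 2| ≤ ε * A + ε ^ 2 * ‖g‖ ^ 2 := by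
    refine (abs_add_le _ _).trans_eq ?_
    rw [abs_mul, abs_of_nonneg hε, abs_of_nonneg (by positivity : 0 ≤ ε ^ 2 * ‖g‖ ^ 2)]
  rw [newDir, sub_sub, norm_inner_inv_norm_smul_smul_sub, inner_sub_norm_sq_eq hν, abs_neg]
  calc |ε * ⟪g, (2 * ⟪V, ν⟫) • ν - V⟫ + ε ^ 2 * ‖g‖ ^ 2| / n
      ≤ ε * A * n⁻¹ + ε ^ 2 * ‖g‖ ^ 2 * n⁻¹ := by
        rw [div_eq_mul_inv, ← add_mul]; gcongr
    _ ≤ ε * A * (⟪V, ν⟫⁻¹ + 2 * (ε * ‖g‖) / ⟪V, ν⟫ ^ 2) + ε ^ 2 * ‖g‖ ^ 2 * (2 / ⟪V, ν⟫) := by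
        gcongr
        rw [inv_le_comm₀ (by linarith) (by positivity), inv_div]
        exact hn
    _ = _ := by field_simp; ring

lemma newDir_uniform_estimates (hν : ‖ν‖ = 1) {δ M : ℝ} (hδ : 0 < δ) (hc : δ ≤ ⟪V, ν⟫)
    (hM : ‖g‖ ≤ M) (hε : 0 < ε) (hεlt : ε < δ / (2 * (M + 1))) :
    ‖newDir V ν g ε - ν‖ ≤ 4 * (M + 1) ^ 2 * (‖V‖ + δ) / δ ^ 2 * ε ∧
      ‖⟪V, newDir V ν g ε⟫ • newDir V ν g ε - ⟪V, ν⟫ • ν - ε • g‖ ≤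
        4 * (M + 1) ^ 2 * (‖V‖ + δ) / δ ^ 2 * ε ^ 2
          + ε / ⟪V, ν⟫ * |⟪g, (2 * ⟪V, ν⟫) • ν - V⟫| := by
  have hc₀ : 0 < ⟪V, ν⟫ := hδ.trans_le hc
  have hM₀ : 0 ≤ M := (norm_nonneg g).trans hM
  have hgW : |⟪g, (2 * ⟪V, ν⟫) • ν - V⟫| ≤ M * ‖V‖ :=
    (abs_real_inner_le_norm _ _).trans (by rw [norm_two_inner_smul_sub hν]; gcongr)
  have hsmall : 2 * (ε * ‖g‖) ≤ ⟪V, ν⟫ := by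
    rw [lt_div_iff₀ (by positivity)] at hεlt
    nlinarith [mul_le_mul_of_nonneg_left hM hε.le]
  have hC₁ : 4 * ‖g‖ / ⟪V, ν⟫ ≤ 4 * (M + 1) ^ 2 * (‖V‖ + δ) / δ ^ 2 :=
    calc 4 * ‖g‖ / ⟪V, ν⟫ ≤ 4 * M * δ / δ ^ 2 := by
          rw [pow_two, mul_div_mul_right _ _ hδ.ne']; gcongr
      _ ≤ 4 * (M + 1) ^ 2 * (‖V‖ + δ) / δ ^ 2 := by gcongr <;> nlinarith [norm_nonneg V]
  have hC₂ : 2 * ‖g‖ * (|⟪g, (2 * ⟪V, ν⟫) • ν - V⟫| / ⟪V, ν⟫ + ‖g‖) / ⟪V, ν⟫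
      ≤ 4 * (M + 1) ^ 2 * (‖V‖ + δ) / δ ^ 2 :=
    calc _ ≤ 2 * M * (M * ‖V‖ / δ + M) / δ := by gcongr
      _ = 2 * M ^ 2 * (‖V‖ + δ) / δ ^ 2 := by field_simp
      _ ≤ 4 * (M + 1) ^ 2 * (‖V‖ + δ) / δ ^ 2 := by gcongr <;> nlinarith
  exact ⟨(norm_newDir_sub_le hν hc₀ hε.le hsmall).trans (by gcongr),
    (norm_inner_newDir_smul_sub_le hν hc₀ hε.le hsmall).trans (by gcongr)⟩

end NewDir

lemma tendsto_norm_div_nhdsGT_zero_of_le_mul_sq {F : Type*} [SeminormedAddCommGroup F]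
    {f : ℝ → F} {C : ℝ} (hf : ∀ᶠ x in 𝓝[>] 0, ‖f x‖ ≤ C * x ^ 2) :
    Tendsto (fun x => ‖f x‖ / x) (𝓝[>] 0) (𝓝 0) := by
  have hlin : Tendsto (fun x : ℝ => C * x) (𝓝[>] 0) (𝓝 0) := by
    simpa using (tendsto_id.const_mul C).mono_left (nhdsWithin_le_nhds (a := (0 : ℝ)))
  refine squeeze_zero' ?_ ?_ hlin
  · filter_upwards [self_mem_nhdsWithin] with x (hx : 0 < x)
    positivity
  · filter_upwards [hf, self_mem_nhdsWithin] with x hfx (hx : 0 < x)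
    rw [div_le_iff₀ hx]
    linarith

/-- the key linear-algebra estimate of the improvement of flatness. -/
theorem improvement_direction_estimate
    (d : ℕ) (ν V g W : E d) (hν : ‖ν‖ = 1) (δ M : ℝ) (hδ : 0 < δ)
    (hc : δ ≤ ⟪V, ν⟫) (hM : ‖g‖ ≤ M)
    (hW : W = (2 * ⟪V, ν⟫) • ν - V) :
    ∃ C > 0, ∃ ε₀ > 0, ∀ ε : ℝ, 0 < ε → ε < ε₀ →
      (‖newDir V ν g ε - ν‖ ≤ C * ε) ∧
      (‖⟪V, newDir V ν g ε⟫ • newDir V ν g ε - ⟪V, ν⟫ • ν - ε • g‖ ≤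
        C * ε ^ 2 + (ε / ⟪V, ν⟫) * |⟪g, W⟫|) ∧
      (⟪g, W⟫ = 0 →
        Tendsto (fun ε' : ℝ =>
            ‖⟪V, newDir V ν g ε'⟫ • newDir V ν g ε' - ⟪V, ν⟫ • ν - ε' • g‖ / ε')
          (𝓝[>] 0) (𝓝 0)) := by
  subst hW
  set C := 4 * (M + 1) ^ 2 * (‖V‖ + δ) / δ ^ 2
  have hM₀ : 0 ≤ M := (norm_nonneg g).trans hM
  have hε₀ : 0 < δ / (2 * (M + 1)) := by positivity
  have hestimates (ε : ℝ) (hε : 0 < ε) (hεlt : ε < δ / (2 * (M + 1))) :=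
    newDir_uniform_estimates hν hδ hc hM hε hεlt
  refine ⟨C, by positivity, δ / (2 * (M + 1)), hε₀, fun ε hε hεlt =>
    ⟨(hestimates ε hε hεlt).1, (hestimates ε hε hεlt).2, fun hgW₀ => ?_⟩⟩
  refine tendsto_norm_div_nhdsGT_zero_of_le_mul_sq (C := C) ?_
  filter_upwards [Ioo_mem_nhdsGT hε₀] with x hx
  simpa [hgW₀] using (hestimates x hx.1 hx.2).2
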